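/- Let d ≥ 1 be an integer and let α > d and λ > 0 be reals. There exists a constant c > 0, depending only on d, α and λ, such that for every probability space, every random variable W with W ≥ 1 almost surely, and all reals w ≥ 1 and u ≥ 1: ∑_{y ∈ ℤ^d, y ≠ 0} E[ 1{W ≥ u}·(1 − exp(−λ·w·W·‖y‖^{−α})) ] ≤ c·w^{d/α}·E[ W^{d/α}·1{W ≥ u} ]. -/

import Mathlib

open MeasureTheory

noncomputable def euclNorm {d : ℕ} (y : Fin d → ℤ) : ℝ :=
  Real.sqrt (∑ i, ((y i : ℝ)) ^ 2)

/-!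
Since `1 - exp (-t) ≤ min 1 t`, it suffices to bound, for `A = max λ 1 · w · W ≥ 1`, the lattice
sum `∑_{y ≠ 0} min 1 (A ‖y‖^{-α})` by `C A^{d/α}` and to integrate over `{W ≥ u}`.
As `‖y‖` dominates the sup norm `|y|_∞`, and the sphere `{|y|_∞ = k}` has at most
`2d 3^{d-1} k^{d-1}` points, the lattice sum is at most a constant times
`∑_k k^{d-1} min 1 (A k^{-α})`. Split at `k ≈ A^{1/α}`: the terms below contribute at most
`2 A^{d/α}`, and by the integral test those above at most `A ∑_{k > A^{1/α}} k^{-(1 + α - d)}`,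
which is `O(A · A^{-(α-d)/α}) = O(A^{d/α})`.
-/

open Finset
open scoped ENNReal

def supNormNat {d : ℕ} (y : Fin d → ℤ) : ℕ := univ.sup fun i => (y i).natAbs

theorem supNormNat_pos {d : ℕ} {y : Fin d → ℤ} (hy : y ≠ 0) : 0 < supNormNat y := by
  obtain ⟨i, hi⟩ := Function.ne_iff.mp hy
  exact (Int.natAbs_pos.mpr hi).trans_le (le_sup (f := fun i => (y i).natAbs) (mem_univ i))

theorem supNormNat_le_euclNorm {d : ℕ} (y : Fin d → ℤ) : (supNormNat y : ℝ) ≤ euclNorm y := by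
  have hfloor : supNormNat y ≤ ⌊euclNorm y⌋₊ := Finset.sup_le fun i _ => by
    refine Nat.le_floor ?_
    rw [Nat.cast_natAbs, Int.cast_abs]
    exact Real.abs_le_sqrt
      (single_le_sum (f := fun j => ((y j : ℝ)) ^ 2) (fun j _ => sq_nonneg _) (mem_univ i))
  exact (Nat.cast_le.mpr hfloor).trans (Nat.floor_le (Real.sqrt_nonneg _))

theorem supNormNat_le_iff {d k : ℕ} {y : Fin d → ℤ} :
    supNormNat y ≤ k ↔ y ∈ Icc (-(k : Fin d → ℤ)) k := by
  simp only [mem_Icc, Pi.le_def, supNormNat, Finset.sup_le_iff, mem_univ, true_implies,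
    ← forall_and]
  exact forall_congr' fun i => by simp only [Pi.neg_apply, Pi.natCast_apply]; omega

theorem card_Icc_neg_natCast (d k : ℕ) : #(Icc (-(k : Fin d → ℤ)) k) = (2 * k + 1) ^ d := by
  simp only [Pi.card_Icc, Pi.neg_apply, Pi.natCast_apply, Int.card_Icc, prod_const, card_univ,
    Fintype.card_fin]
  congr 1
  omega

theorem card_filter_supNormNat_eq_succ_le (d k : ℕ) :
    #{y ∈ Icc (-((k + 1 : ℕ) : Fin d → ℤ)) (k + 1 : ℕ) | supNormNat y = k + 1}
      ≤ 2 * d * 3 ^ (d - 1) * (k + 1) ^ (d - 1) := by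
  have hsphere : {y ∈ Icc (-((k + 1 : ℕ) : Fin d → ℤ)) (k + 1 : ℕ) | supNormNat y = k + 1}
      ⊆ Icc (-((k + 1 : ℕ) : Fin d → ℤ)) (k + 1 : ℕ) \ Icc (-(k : Fin d → ℤ)) k := fun y hy => by
    simp only [mem_filter, mem_sdiff, ← supNormNat_le_iff] at hy ⊢
    omega
  have hsub : Icc (-(k : Fin d → ℤ)) k ⊆ Icc (-((k + 1 : ℕ) : Fin d → ℤ)) (k + 1 : ℕ) :=
    fun y hy => supNormNat_le_iff.mp (supNormNat_le_iff.mpr hy).step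
  have hpow : (2 * k + 1) ^ d ≤ (2 * k + 3) ^ d := Nat.pow_le_pow_left (by omega) d
  have hdiff : ((2 * k + 3) ^ d - (2 * k + 1) ^ d : ℤ) ≤ 2 * d * (2 * k + 3) ^ (d - 1) := by
    have h := abs_pow_sub_pow_le (2 * k + 3 : ℤ) (2 * k + 1) d
    rw [show (2 * k + 3 : ℤ) - (2 * k + 1) = 2 by ring, abs_two,
      abs_of_nonneg (show (0 : ℤ) ≤ 2 * k + 3 by positivity),
      abs_of_nonneg (show (0 : ℤ) ≤ 2 * k + 1 by positivity), max_eq_left (by linarith)] at h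
    linarith [le_abs_self ((2 * k + 3 : ℤ) ^ d - (2 * k + 1) ^ d)]
  calc #{y ∈ Icc (-((k + 1 : ℕ) : Fin d → ℤ)) (k + 1 : ℕ) | supNormNat y = k + 1}
      ≤ #(Icc (-((k + 1 : ℕ) : Fin d → ℤ)) (k + 1 : ℕ)) - #(Icc (-(k : Fin d → ℤ)) k) :=
        (card_le_card hsphere).trans (card_sdiff_of_subset hsub).le
    _ = (2 * k + 3) ^ d - (2 * k + 1) ^ d := by
        rw [card_Icc_neg_natCast, card_Icc_neg_natCast]
        ring_nf
    _ ≤ 2 * d * (2 * k + 3) ^ (d - 1) := by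
        zify [hpow]
        exact hdiff
    _ ≤ 2 * d * (3 * (k + 1)) ^ (d - 1) := by gcongr; omega
    _ = 2 * d * 3 ^ (d - 1) * (k + 1) ^ (d - 1) := by rw [mul_pow]; ring

theorem tsum_comp_supNormNat_le {d : ℕ} (F : ℕ → ℝ≥0∞) (hF : F 0 = 0) :
    ∑' y : Fin d → ℤ, F (supNormNat y)
      ≤ ∑' k : ℕ, ((2 * d * 3 ^ (d - 1) * k ^ (d - 1) : ℕ) : ℝ≥0∞) * F k := by
  have hsphere : ∀ k, ∑' y : Fin d → ℤ, (if supNormNat y = k then F k else 0)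
      = #{y ∈ Icc (-(k : Fin d → ℤ)) k | supNormNat y = k} * F k := by
    intro k
    rw [tsum_eq_sum fun y hy => if_neg fun h => hy (supNormNat_le_iff.mp h.le), ← sum_filter,
      sum_const, nsmul_eq_mul]
  calc ∑' y : Fin d → ℤ, F (supNormNat y)
      = ∑' y : Fin d → ℤ, ∑' k, (if supNormNat y = k then F k else 0) := by
        simp only [tsum_ite_eq']
    _ = ∑' k, #{y ∈ Icc (-(k : Fin d → ℤ)) k | supNormNat y = k} * F k := by
        rw [ENNReal.tsum_comm]
        exact tsum_congr hsphere
    _ ≤ _ := by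
        refine ENNReal.tsum_le_tsum fun k => ?_
        rcases k with _ | k
        · simp [hF]
        · gcongr
          exact_mod_cast card_filter_supNormNat_eq_succ_le d k

theorem summable_nat_add_rpow_neg {ε : ℝ} (hε : 0 < ε) (N : ℕ) :
    Summable fun n : ℕ => ((n + N : ℕ) : ℝ) ^ (-(1 + ε)) :=
  (summable_nat_add_iff N).mpr (Real.summable_nat_rpow.mpr (by linarith))

theorem tsum_nat_add_rpow_neg_le {ε : ℝ} (hε : 0 < ε) {N : ℕ} (hN : 1 ≤ N) :
    ∑' n : ℕ, ((n + N : ℕ) : ℝ) ^ (-(1 + ε)) ≤ (1 + 1 / ε) * (N : ℝ) ^ (-ε) := by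
  have hN0 : (0 : ℝ) < N := by exact_mod_cast hN
  have hanti : AntitoneOn (fun x : ℝ => x ^ (-(1 + ε))) (Set.Ici (N : ℝ)) :=
    fun x hx y _ hxy => Real.rpow_le_rpow_of_nonpos (hN0.trans_le hx) hxy (by linarith)
  have hint : ∫ x in Set.Ioi (N : ℝ), x ^ (-(1 + ε)) = (N : ℝ) ^ (-ε) / ε := by
    rw [integral_Ioi_rpow_of_lt (by linarith) hN0]
    ring_nf
  have htail : ∑' n : ℕ, ((n + 1 + N : ℕ) : ℝ) ^ (-(1 + ε)) ≤ (N : ℝ) ^ (-ε) / ε := by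
    simp_rw [Nat.add_right_comm _ 1 N, ← hint]
    exact hanti.tsum_comp_add_le_integral N (integrableOn_Ioi_rpow_of_lt (by linarith) hN0)
      (fun t ht => Real.rpow_nonneg (hN0.trans ht).le _)
  have hfirst : (N : ℝ) ^ (-(1 + ε)) ≤ (N : ℝ) ^ (-ε) :=
    Real.rpow_le_rpow_of_exponent_le (by exact_mod_cast hN) (by linarith)
  rw [(summable_nat_add_rpow_neg hε N).tsum_eq_zero_add, zero_add]
  linarith [show (1 + 1 / ε) * (N : ℝ) ^ (-ε) = (N : ℝ) ^ (-ε) + (N : ℝ) ^ (-ε) / ε by ring]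

theorem sum_range_pow_mul_min_one_le {d M : ℕ} (hd : 1 ≤ d) (hM : 1 ≤ M) (x : ℕ → ℝ) :
    ∑ k ∈ range (M + 1), (k : ℝ) ^ (d - 1) * min 1 (x k) ≤ 2 * (M : ℝ) ^ d := by
  calc ∑ k ∈ range (M + 1), (k : ℝ) ^ (d - 1) * min 1 (x k)
      ≤ ∑ k ∈ range (M + 1), (M : ℝ) ^ (d - 1) := by
        refine sum_le_sum fun k hk => ?_
        have hkM : (k : ℝ) ≤ M := by exact_mod_cast Nat.lt_succ_iff.mp (mem_range.mp hk)
        calc (k : ℝ) ^ (d - 1) * min 1 (x k) ≤ (k : ℝ) ^ (d - 1) * 1 :=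
              mul_le_mul_of_nonneg_left (min_le_left _ _) (by positivity)
          _ ≤ (M : ℝ) ^ (d - 1) := by rw [mul_one]; gcongr
    _ = (M + 1) * (M : ℝ) ^ (d - 1) := by simp
    _ ≤ 2 * M * (M : ℝ) ^ (d - 1) := by
        gcongr
        linarith [(show (1 : ℝ) ≤ M by exact_mod_cast hM)]
    _ = 2 * (M : ℝ) ^ d := by rw [mul_assoc, mul_pow_sub_one (by omega)]

theorem pow_mul_min_one_le {d : ℕ} (hd : 1 ≤ d) {k : ℝ} (hk : 0 < k) (α A : ℝ) :
    k ^ (d - 1) * min 1 (A * k ^ (-α)) ≤ A * k ^ (-(1 + (α - d))) :=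
  calc k ^ (d - 1) * min 1 (A * k ^ (-α)) ≤ k ^ (d - 1) * (A * k ^ (-α)) :=
        mul_le_mul_of_nonneg_left (min_le_right _ _) (by positivity)
    _ = A * k ^ (-(1 + (α - d))) := by
        rw [← Real.rpow_natCast, mul_left_comm, ← Real.rpow_add hk, Nat.cast_sub hd]
        congr 2
        push_cast
        ring

theorem tsum_pow_mul_min_one_le {d : ℕ} (hd : 1 ≤ d) {α A : ℝ} (hα : (d : ℝ) < α)
    (hA : 1 ≤ A) :
    ∑' k : ℕ, ENNReal.ofReal ((k : ℝ) ^ (d - 1) * min 1 (A * (k : ℝ) ^ (-α)))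
      ≤ ENNReal.ofReal ((3 + 1 / (α - d)) * A ^ ((d : ℝ) / α)) := by
  set ε := α - d with hε_def
  have hε : 0 < ε := by linarith
  have hα0 : 0 < α := by linarith [(Nat.cast_nonneg d : (0 : ℝ) ≤ d)]
  set R := A ^ (1 / α)
  have hR1 : 1 ≤ R := Real.one_le_rpow hA (by positivity)
  have hRα : R ^ α = A := by
    rw [← Real.rpow_mul (by linarith), one_div_mul_cancel hα0.ne', Real.rpow_one]
  have hRd : A ^ ((d : ℝ) / α) = R ^ d := by
    rw [← Real.rpow_natCast, ← Real.rpow_mul (by linarith), one_div_mul_eq_div]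
  set M := ⌊R⌋₊
  have hM1 : 1 ≤ M := Nat.le_floor (by exact_mod_cast hR1)
  have hRM : R ≤ ((M + 1 : ℕ) : ℝ) := by push_cast; exact (Nat.lt_floor_add_one R).le
  set a : ℕ → ℝ := fun k => (k : ℝ) ^ (d - 1) * min 1 (A * (k : ℝ) ^ (-α))
  have ha0 : ∀ k, 0 ≤ a k :=
    fun k => mul_nonneg (by positivity) (le_min zero_le_one (by positivity))
  have hhead : ∑ k ∈ range (M + 1), a k ≤ 2 * R ^ d :=
    (sum_range_pow_mul_min_one_le hd hM1 _).trans (by gcongr; exact Nat.floor_le (by linarith))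
  have htail_le : ∀ n, a (n + (M + 1)) ≤ A * ((n + (M + 1) : ℕ) : ℝ) ^ (-(1 + ε)) :=
    fun n => pow_mul_min_one_le hd (by positivity) α A
  have hsum_tail : Summable fun n => a (n + (M + 1)) :=
    .of_nonneg_of_le (fun n => ha0 _) htail_le ((summable_nat_add_rpow_neg hε _).mul_left A)
  have htail : ∑' n, a (n + (M + 1)) ≤ (1 + 1 / ε) * R ^ d := by
    calc ∑' n, a (n + (M + 1)) ≤ ∑' n, A * ((n + (M + 1) : ℕ) : ℝ) ^ (-(1 + ε)) :=
          hsum_tail.tsum_le_tsum htail_le ((summable_nat_add_rpow_neg hε _).mul_left A)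
      _ ≤ A * ((1 + 1 / ε) * ((M + 1 : ℕ) : ℝ) ^ (-ε)) := by
          rw [tsum_mul_left]
          gcongr
          exact tsum_nat_add_rpow_neg_le hε (Nat.le_add_left 1 M)
      _ ≤ A * ((1 + 1 / ε) * R ^ (-ε)) := by
          have := Real.rpow_le_rpow_of_nonpos (zero_lt_one.trans_le hR1) hRM
            (neg_nonpos.mpr hε.le)
          gcongr
      _ = (1 + 1 / ε) * R ^ d := by
          rw [← hRα, mul_left_comm, ← Real.rpow_add (zero_lt_one.trans_le hR1), hε_def,
            ← Real.rpow_natCast]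
          ring_nf
  have hsum := (summable_nat_add_iff (M + 1)).mp hsum_tail
  rw [← ENNReal.ofReal_tsum_of_nonneg ha0 hsum]
  apply ENNReal.ofReal_le_ofReal
  rw [← hsum.sum_add_tsum_nat_add (M + 1), hRd]
  linarith

theorem tsum_min_one_mul_euclNorm_rpow_le {d : ℕ} (hd : 1 ≤ d) {α A : ℝ} (hα : (d : ℝ) < α)
    (hA : 1 ≤ A) :
    ∑' y : {y : Fin d → ℤ // y ≠ 0}, ENNReal.ofReal (min 1 (A * euclNorm y.1 ^ (-α)))
      ≤ ENNReal.ofReal (2 * d * 3 ^ (d - 1) * (3 + 1 / (α - d)) * A ^ ((d : ℝ) / α)) := by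
  have hα0 : 0 < α := by linarith [(Nat.cast_nonneg d : (0 : ℝ) ≤ d)]
  set F : ℕ → ℝ≥0∞ := fun k => ENNReal.ofReal (min 1 (A * (k : ℝ) ^ (-α)))
  -- `0 ^ (-α) = 0` for the real power
  have hF0 : F 0 = 0 := by simp [F, Real.zero_rpow (neg_ne_zero.mpr hα0.ne')]
  have hterm : ∀ y : {y : Fin d → ℤ // y ≠ 0},
      ENNReal.ofReal (min 1 (A * euclNorm y.1 ^ (-α))) ≤ F (supNormNat y.1) := by
    rintro ⟨y, hy⟩
    have hpos : (0 : ℝ) < supNormNat y := by exact_mod_cast supNormNat_pos hy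
    have := Real.rpow_le_rpow_of_nonpos hpos (supNormNat_le_euclNorm y) (neg_nonpos.mpr hα0.le)
    exact ENNReal.ofReal_le_ofReal (min_le_min_left _ (by gcongr))
  calc ∑' y : {y : Fin d → ℤ // y ≠ 0}, ENNReal.ofReal (min 1 (A * euclNorm y.1 ^ (-α)))
      ≤ ∑' y : {y : Fin d → ℤ // y ≠ 0}, F (supNormNat y.1) := ENNReal.tsum_le_tsum hterm
    _ ≤ ∑' y : Fin d → ℤ, F (supNormNat y) :=
        ENNReal.tsum_comp_le_tsum_of_injective Subtype.val_injective (fun y => F (supNormNat y))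
    _ ≤ ∑' k : ℕ, ((2 * d * 3 ^ (d - 1) * k ^ (d - 1) : ℕ) : ℝ≥0∞) * F k :=
        tsum_comp_supNormNat_le F hF0
    _ = ENNReal.ofReal (2 * d * 3 ^ (d - 1)) *
          ∑' k : ℕ, ENNReal.ofReal ((k : ℝ) ^ (d - 1) * min 1 (A * (k : ℝ) ^ (-α))) := by
        rw [← ENNReal.tsum_mul_left]
        refine tsum_congr fun k => ?_
        rw [← ENNReal.ofReal_mul (by positivity), ← ENNReal.ofReal_natCast,
          ← ENNReal.ofReal_mul (by positivity)]
        push_cast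
        ring_nf
    _ ≤ ENNReal.ofReal (2 * d * 3 ^ (d - 1)) *
          ENNReal.ofReal ((3 + 1 / (α - d)) * A ^ ((d : ℝ) / α)) := by
        gcongr
        exact tsum_pow_mul_min_one_le hd hα hA
    _ = _ := by rw [← ENNReal.ofReal_mul (by positivity)]; ring_nf

theorem one_sub_exp_neg_le_min (t : ℝ) : 1 - Real.exp (-t) ≤ min 1 t :=
  le_min (by linarith [Real.exp_pos (-t)]) (by linarith [Real.add_one_le_exp (-t)])

theorem tsum_one_sub_exp_neg_mul_euclNorm_rpow_le {d : ℕ} (hd : 1 ≤ d) {α a A : ℝ}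
    (hα : (d : ℝ) < α) (haA : a ≤ A) (hA : 1 ≤ A) :
    ∑' y : {y : Fin d → ℤ // y ≠ 0}, ENNReal.ofReal (1 - Real.exp (-(a * euclNorm y.1 ^ (-α))))
      ≤ ENNReal.ofReal (2 * d * 3 ^ (d - 1) * (3 + 1 / (α - d)) * A ^ ((d : ℝ) / α)) := by
  refine (ENNReal.tsum_le_tsum fun y => ENNReal.ofReal_le_ofReal ?_).trans
    (tsum_min_one_mul_euclNorm_rpow_le hd hα hA)
  have hs : 0 ≤ euclNorm y.1 ^ (-α) := Real.rpow_nonneg (Real.sqrt_nonneg _) _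
  exact (one_sub_exp_neg_le_min _).trans (min_le_min_left _ (by gcongr))

theorem stmt4_general (d : ℕ) (hd : 1 ≤ d) (α lam : ℝ) (hα : (d : ℝ) < α) :
    ∃ c > (0 : ℝ),
      ∀ (Ω : Type) [MeasurableSpace Ω] (μ : Measure Ω) [IsProbabilityMeasure μ]
        (W : Ω → ℝ), Measurable W → (∀ᵐ ω ∂μ, 1 ≤ W ω) →
      ∀ w u : ℝ, 1 ≤ w → 1 ≤ u →
      (∑' y : {y : Fin d → ℤ // y ≠ 0},
          ∫⁻ ω, ENNReal.ofReal
            (if u ≤ W ω then 1 - Real.exp (-(lam * w * W ω * euclNorm y.1 ^ (-α)))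
             else 0) ∂μ)
        ≤ ENNReal.ofReal (c * w ^ ((d : ℝ) / α)) *
            ∫⁻ ω, ENNReal.ofReal (if u ≤ W ω then W ω ^ ((d : ℝ) / α) else 0) ∂μ := by
  set L := max lam 1
  set C : ℝ := 2 * d * 3 ^ (d - 1) * (3 + 1 / (α - d))
  refine ⟨C * L ^ ((d : ℝ) / α), by positivity, ?_⟩
  intro Ω _ μ _ W hW hW1 w u hw _
  rw [← lintegral_tsum fun y => (Measurable.ite (measurableSet_le measurable_const hW)
      (by fun_prop) measurable_const).ennreal_ofReal.aemeasurable,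
    ← lintegral_const_mul' _ _ ENNReal.ofReal_ne_top]
  refine lintegral_mono_ae ?_
  filter_upwards [hW1] with ω hWω
  by_cases hu : u ≤ W ω
  swap
  · simp [hu]
  have hW0 : 0 ≤ W ω := by linarith
  have hL : 1 ≤ L := le_max_right lam 1
  have hA : 1 ≤ L * w * W ω := by nlinarith [mul_le_mul hL hw zero_le_one (by positivity)]
  simp only [if_pos hu]
  calc _ ≤ ENNReal.ofReal (C * (L * w * W ω) ^ ((d : ℝ) / α)) :=
        tsum_one_sub_exp_neg_mul_euclNorm_rpow_le hd hα (by gcongr; exact le_max_left _ _) hA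
    _ = ENNReal.ofReal (C * L ^ ((d : ℝ) / α) * w ^ ((d : ℝ) / α)) *
          ENNReal.ofReal (W ω ^ ((d : ℝ) / α)) := by
        rw [← ENNReal.ofReal_mul (by positivity), Real.mul_rpow (by positivity) hW0,
          Real.mul_rpow (by positivity) (by positivity)]
        ring_nf

/-- **(6.9).** For `d ≥ 1`, `α > d`, `λ > 0` there is a constant `c > 0` such that
for every probability space, every random variable `W ≥ 1` a.s. and all `w, u ≥ 1`:
`∑_{y ≠ 0} E[1{W ≥ u} (1 - exp(-λ w W ‖y‖^{-α}))] ≤ c w^{d/α} E[W^{d/α} 1{W ≥ u}]`. -/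
theorem stmt4 (d : ℕ) (hd : 1 ≤ d) (α lam : ℝ) (hα : (d : ℝ) < α) (hlam : 0 < lam) :
    ∃ c > (0 : ℝ),
      ∀ (Ω : Type) [MeasurableSpace Ω] (μ : Measure Ω) [IsProbabilityMeasure μ]
        (W : Ω → ℝ), Measurable W → (∀ᵐ ω ∂μ, 1 ≤ W ω) →
      ∀ w u : ℝ, 1 ≤ w → 1 ≤ u →
      (∑' y : {y : Fin d → ℤ // y ≠ 0},
          ∫⁻ ω, ENNReal.ofReal
            (if u ≤ W ω then 1 - Real.exp (-(lam * w * W ω * euclNorm y.1 ^ (-α)))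
             else 0) ∂μ)
        ≤ ENNReal.ofReal (c * w ^ ((d : ℝ) / α)) *
            ∫⁻ ω, ENNReal.ofReal (if u ≤ W ω then W ω ^ ((d : ℝ) / α) else 0) ∂μ :=
  stmt4_general d hd α lam hα
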